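/- arXiv:quant-ph/0205163 — 2 statements merged into one kernel-verified Lean document; each statement's English description precedes it below -/
import Mathlib

section
/- Let (Σ, L, ξ) be a state property system and let a ∈ L be a classical property. Then its complement is unique: if b and b' both satisfy a ∨ b = I, a ∧ b = 0, a ssr b and a ∨ b' = I, a ∧ b' = 0, a ssr b', then b = b'. Moreover the complement a^c is itself a classical property and (a^c)^c = a. -/
/-! If `a ⊔ c = ⊤` and `a` ssr `c`, then `c` is actual in every state where `a` is not, since
`⊤` is always actual; and `a` is never actual together with a property disjoint from it.
Hence every property disjoint from `a` lies below every such `c`, which gives uniqueness,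
while `(a^c)^c = a` is the symmetry of the defining conditions. -/

/-- A state property system `(Σ, L, ξ)`: a set of states `S`, a complete lattice `L`
(bottom `⊥ = 0`, top `⊤ = I`) and a map `ξ` sending each state to the set of properties
actual in it, such that `0` is never actual, actual properties are closed under arbitrary
infima (of arbitrary families, in particular `⊤ = sInf ∅` is always actual), and
`a ≤ b ↔ ∀ r, a ∈ ξ r → b ∈ ξ r`. -/
structure SPS (S : Type*) (L : Type*) [CompleteLattice L] where
  ξ : S → Set L
  bot_not_mem : ∀ p, ⊥ ∉ ξ p
  sInf_mem : ∀ p, ∀ A ⊆ ξ p, sInf A ∈ ξ p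
  le_iff : ∀ a b : L, a ≤ b ↔ ∀ r, a ∈ ξ r → b ∈ ξ r

/-- The Cartan map `κ : L → P(Σ)`, `κ a = {p | a ∈ ξ p}`. -/
def SPS.cartan {S L : Type*} [CompleteLattice L] (P : SPS S L) (a : L) : Set S :=
  {p | a ∈ P.ξ p}

/-- `a` and `b` are separated by a super selection rule. -/
def SPS.ssr {S L : Type*} [CompleteLattice L] (P : SPS S L) (a b : L) : Prop :=
  ∀ p, a ⊔ b ∈ P.ξ p → a ∈ P.ξ p ∨ b ∈ P.ξ p

/-- `a` is a classical property: it has a complement `c` with `a ⊔ c = ⊤`, `a ⊓ c = ⊥`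
and `a` ssr `c`. -/
def SPS.IsClassical {S L : Type*} [CompleteLattice L] (P : SPS S L) (a : L) : Prop :=
  ∃ c : L, a ⊔ c = ⊤ ∧ a ⊓ c = ⊥ ∧ P.ssr a c

/-- `(X, F)` is a closure space: `∅ ∈ F`, `X ∈ F`, and `F` is closed under arbitrary
nonempty intersections. -/
def IsClosureSpace {X : Type*} (F : Set (Set X)) : Prop :=
  ∅ ∈ F ∧ Set.univ ∈ F ∧ ∀ G ⊆ F, G.Nonempty → ⋂₀ G ∈ F

/-- In a closure space `(X, F)`, a set is closed iff it is in `F`, open iff its complement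
is in `F`, and clopen iff both. -/
def IsClopenIn {X : Type*} (F : Set (Set X)) (A : Set X) : Prop :=
  A ∈ F ∧ Aᶜ ∈ F

/-- A closure space is connected iff its only clopen subsets are `∅` and `X`. -/
def IsConnectedCS {X : Type*} (F : Set (Set X)) : Prop :=
  ∀ A : Set X, IsClopenIn F A → A = ∅ ∨ A = Set.univ

/-- A subset `A` of a closure space `(X, F)` is connected iff the induced subspace
`(A, {F ∩ A | F ∈ F})` is connected, i.e. the only subsets of `A` that are clopen in the
trace closure space are `∅` and `A`. -/
def IsConnectedSubset {X : Type*} (F : Set (Set X)) (A : Set X) : Prop :=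
  ∀ B ⊆ A, (∃ C ∈ F, B = C ∩ A) → (∃ D ∈ F, A \ B = D ∩ A) → B = ∅ ∨ B = A

/-- The connection component of `x`: the union of all connected subsets containing `x`. -/
def component {X : Type*} (F : Set (Set X)) (x : X) : Set X :=
  ⋃₀ {A : Set X | x ∈ A ∧ IsConnectedSubset F A}

/-- The closure operator of a closure space: `cl A` is the intersection of all members of
`F` containing `A` (the least such member, i.e. the supremum operation of the lattice `F`
applied to unions). -/
def closureOf {X : Type*} (F : Set (Set X)) (A : Set X) : Set X :=
  ⋂₀ {C ∈ F | A ⊆ C}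

namespace SPS

variable {S L : Type*} [CompleteLattice L] (P : SPS S L)

theorem top_mem (p : S) : (⊤ : L) ∈ P.ξ p := by
  simpa using P.sInf_mem p ∅ (Set.empty_subset _)

theorem inf_mem {p : S} {x y : L} (hx : x ∈ P.ξ p) (hy : y ∈ P.ξ p) : x ⊓ y ∈ P.ξ p := by
  simpa using P.sInf_mem p {x, y} (Set.insert_subset hx (Set.singleton_subset_iff.mpr hy))

variable {P}

theorem ssr.symm {a b : L} (h : P.ssr a b) : P.ssr b a := fun p hp =>
  (h p (sup_comm b a ▸ hp)).symm

theorem le_of_inf_eq_bot_of_ssr {a c c' : L} (hc : a ⊓ c = ⊥) (hc'1 : a ⊔ c' = ⊤)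
    (hc'3 : P.ssr a c') : c ≤ c' := by
  refine (P.le_iff c c').mpr fun r hr => ?_
  rcases hc'3 r (hc'1 ▸ P.top_mem r) with ha | hc'
  · exact absurd (hc ▸ P.inf_mem ha hr) (P.bot_not_mem r)
  · exact hc'

end SPS

/-- If `a` is a classical property of a state property system, its complement
is unique: any `b, b'` with `a ⊔ b = ⊤`, `a ⊓ b = ⊥`, `a ssr b` and likewise for `b'`
satisfy `b = b'`.  Moreover the complement `b = a^c` is itself a classical property, with
complement `a`, i.e. `(a^c)^c = a` (witnessed by `b ⊔ a = ⊤`, `b ⊓ a = ⊥`, `b ssr a`). -/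
theorem stmt_3 {S L : Type*} [CompleteLattice L] (P : SPS S L) (a b b' : L)
    (hb1 : a ⊔ b = ⊤) (hb2 : a ⊓ b = ⊥) (hb3 : P.ssr a b)
    (hb'1 : a ⊔ b' = ⊤) (hb'2 : a ⊓ b' = ⊥) (hb'3 : P.ssr a b') :
    b = b' ∧ P.IsClassical b ∧ (b ⊔ a = ⊤ ∧ b ⊓ a = ⊥ ∧ P.ssr b a) := by
  have hba : b ⊔ a = ⊤ ∧ b ⊓ a = ⊥ ∧ P.ssr b a :=
    ⟨sup_comm a b ▸ hb1, inf_comm a b ▸ hb2, hb3.symm⟩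
  refine ⟨le_antisymm ?_ ?_, ⟨a, hba⟩, hba⟩
  · exact SPS.le_of_inf_eq_bot_of_ssr hb2 hb'1 hb'3
  · exact SPS.le_of_inf_eq_bot_of_ssr hb'2 hb1 hb3
end

section
/- Let (Σ, L, ξ) be a state property system with Cartan map κ. The following are equivalent: (1) the properties 0 and I are the only classical properties of (Σ, L, ξ); (2) the closure space (Σ, κ(L)) is connected. -/
/-!
Axiom (iii) says that the Cartan map `κ` is an order embedding of `L` into `P(Σ)`, and (ii)
makes it preserve `⊤` and binary meets, while (i) gives `κ ⊥ = ∅`. Hence `c` is a classical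
complement of `a` exactly when `κ c = (κ a)ᶜ`: the ssr condition says `κ a ∪ κ c` covers `Σ`,
and `a ⊓ c = ⊥` says `κ a ∩ κ c = ∅`. So the classical properties are exactly the elements
whose image under `κ` is clopen, and `κ` sends `⊥`, `⊤` (and only these) to `∅`, `Σ`.
-/

namespace SPS

variable {S L : Type*} [CompleteLattice L] (P : SPS S L)

@[simp]
theorem mem_cartan {a : L} {p : S} : p ∈ P.cartan a ↔ a ∈ P.ξ p := Iff.rfl

theorem cartan_subset_cartan_iff {a b : L} : P.cartan a ⊆ P.cartan b ↔ a ≤ b :=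
  (P.le_iff a b).symm

theorem cartan_injective : Function.Injective P.cartan := fun _ _ h =>
  le_antisymm (P.cartan_subset_cartan_iff.1 h.le) (P.cartan_subset_cartan_iff.1 h.ge)

theorem cartan_mono : Monotone P.cartan := fun _ _ h => P.cartan_subset_cartan_iff.2 h

@[simp]
theorem cartan_top : P.cartan ⊤ = Set.univ :=
  Set.eq_univ_of_forall fun p => by simpa using P.sInf_mem p ∅ (Set.empty_subset _)

@[simp]
theorem cartan_bot : P.cartan ⊥ = ∅ :=
  Set.eq_empty_of_forall_notMem P.bot_not_mem

@[simp]
theorem cartan_inf (a b : L) : P.cartan (a ⊓ b) = P.cartan a ∩ P.cartan b := by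
  refine subset_antisymm (Set.subset_inter (P.cartan_mono inf_le_left)
    (P.cartan_mono inf_le_right)) fun p ⟨ha, hb⟩ => ?_
  have hpair : {a, b} ⊆ P.ξ p := Set.insert_subset ha (Set.singleton_subset_iff.2 hb)
  simpa using P.sInf_mem p {a, b} hpair

@[simp]
theorem cartan_eq_bot_iff {a : L} : P.cartan a = ∅ ↔ a = ⊥ := by
  rw [← P.cartan_bot, P.cartan_injective.eq_iff]

@[simp]
theorem cartan_eq_univ_iff {a : L} : P.cartan a = Set.univ ↔ a = ⊤ := by
  rw [← P.cartan_top, P.cartan_injective.eq_iff]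

theorem cartan_eq_compl_iff {a c : L} :
    P.cartan c = (P.cartan a)ᶜ ↔ a ⊔ c = ⊤ ∧ a ⊓ c = ⊥ ∧ P.ssr a c := by
  constructor
  · intro hc
    have hcover : P.cartan a ∪ P.cartan c = Set.univ := by
      rw [hc, Set.union_compl_self]
    refine ⟨?_, ?_, fun p _ => (em (p ∈ P.cartan a)).imp_right fun h => hc.ge h⟩
    · rw [← P.cartan_eq_univ_iff, Set.eq_univ_iff_forall]
      intro p
      rcases hcover.ge (Set.mem_univ p) with hp | hp
      exacts [P.cartan_mono le_sup_left hp, P.cartan_mono le_sup_right hp]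
    · rw [← P.cartan_eq_bot_iff, cartan_inf, hc, Set.inter_compl_self]
  · rintro ⟨hsup, hinf, hssr⟩
    have hdisj : P.cartan a ∩ P.cartan c = ∅ := by rw [← cartan_inf, hinf, cartan_bot]
    ext p
    constructor
    · exact fun hc ha => hdisj.subset ⟨ha, hc⟩
    · intro ha
      have hp : a ⊔ c ∈ P.ξ p := hsup ▸ P.cartan_top.ge (Set.mem_univ p)
      exact (hssr p hp).resolve_left ha

theorem isClassical_iff_isClopenIn {a : L} :
    P.IsClassical a ↔ IsClopenIn (Set.range P.cartan) (P.cartan a) := by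
  simp only [IsClassical, IsClopenIn, Set.mem_range, exists_apply_eq_apply, true_and,
    cartan_eq_compl_iff]

end SPS

/-- For a state property system with Cartan map `κ`, the following are
equivalent: (1) `⊥ = 0` and `⊤ = I` are the only classical properties;
(2) the closure space `(Σ, κ(L))` is connected. -/
theorem stmt_6 {S L : Type*} [CompleteLattice L] (P : SPS S L) :
    (∀ a : L, P.IsClassical a → a = ⊥ ∨ a = ⊤) ↔
      IsConnectedCS (Set.range P.cartan) := by
  constructor
  · intro h A hA
    obtain ⟨a, rfl⟩ := hA.1
    simpa using h a (P.isClassical_iff_isClopenIn.2 hA)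
  · intro h a ha
    simpa using h _ (P.isClassical_iff_isClopenIn.1 ha)
end
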